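/- Let (E, ⪯) be a partially ordered set with a metric d making (E, d) complete, and let T: E → E be nondecreasing. Suppose there is a function ψ: ℝ₊ → ℝ₊, upper semicontinuous, monotone nondecreasing, with ψ(r) < r for all r > 0, such that d(Tx, Ty) ≤ ψ(d(x, y)) for all comparable x, y. Assume E is regular: every nondecreasing sequence converging to x̄ satisfies xₙ ⪯ x̄ for all n. If there exists x₀ with x₀ ⪯ Tx₀, then T has a fixed point, and the sequence of iterates Tⁿx₀ converges to it. -/
import Mathlib


open Set Filter Topology

/-- Dhage-type fixed point theorem: a nondecreasing map on a regular
partially ordered complete metric space satisfying a nonlinear D-contraction condition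
on comparable elements and admitting `x₀ ⪯ T x₀` has a fixed point, to which the
iterates of `x₀` converge. -/
theorem dhage_fixed_point
    {E : Type*} [MetricSpace E] [CompleteSpace E] [PartialOrder E]
    (T : E → E) (hT : Monotone T)
    (ψ : ℝ → ℝ)
    (hψnonneg : ∀ r, 0 ≤ r → 0 ≤ ψ r)
    (hψusc : UpperSemicontinuousOn ψ (Ici 0))
    (hψmono : MonotoneOn ψ (Ici 0))
    (hψlt : ∀ r, 0 < r → ψ r < r)
    (hcontr : ∀ x y : E, (x ≤ y ∨ y ≤ x) → dist (T x) (T y) ≤ ψ (dist x y))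
    (hreg : ∀ (x : ℕ → E) (xbar : E), Monotone x →
      Tendsto x atTop (𝓝 xbar) → ∀ n, x n ≤ xbar)
    (x₀ : E) (hx₀ : x₀ ≤ T x₀) :
    ∃ xstar : E, T xstar = xstar ∧
      Tendsto (fun n => T^[n] x₀) atTop (𝓝 xstar) := by
  set x : ℕ → E := fun n => T^[n] x₀ with hx
  have hsucc : ∀ n, x (n + 1) = T (x n) := by
    intro n; simp [hx, Function.iterate_succ_apply']
  have hmono : Monotone x := by
    apply monotone_nat_of_le_succ
    intro n
    induction n with
    | zero => simpa [hx] using hx₀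
    | succ k ih => rw [hsucc, hsucc]; exact hT ih
  set d : ℕ → ℝ := fun n => dist (x n) (x (n + 1)) with hdd
  have hdnn : ∀ n, 0 ≤ d n := fun n => dist_nonneg
  have hdpsi : ∀ n, d (n + 1) ≤ ψ (d n) := by
    intro n
    have := hcontr (x n) (x (n + 1)) (Or.inl (hmono (Nat.le_succ n)))
    simpa [hdd, hsucc] using this
  have hdstep : ∀ n, d (n + 1) ≤ d n := by
    intro n
    rcases eq_or_lt_of_le (hdnn n) with h0 | hpos
    · have hxeq : x n = x (n + 1) := by
        have := dist_eq_zero.mp h0.symm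
        exact this
      have hfix : x n = T (x n) := hxeq.trans (hsucc n)
      have : d (n + 1) = 0 := by
        simp [hdd, hsucc, ← hfix]
      simp [this, ← h0]
    · exact (hdpsi n).trans (hψlt _ hpos).le
  have hdanti : Antitone d := antitone_nat_of_succ_le hdstep
  have hbdd : BddBelow (Set.range d) := ⟨0, by rintro _ ⟨n, rfl⟩; exact hdnn n⟩
  set r : ℝ := ⨅ n, d n with hr
  have hrd : ∀ n, r ≤ d n := fun n => ciInf_le hbdd n
  have hrnn : 0 ≤ r := le_ciInf hdnn
  have hdtend : Tendsto d atTop (𝓝 r) := tendsto_atTop_ciInf hdanti hbdd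
  have hr0 : r = 0 := by
    by_contra hne
    have hrpos : 0 < r := lt_of_le_of_ne hrnn (Ne.symm hne)
    have husc := hψusc r hrnn r (hψlt r hrpos)
    have hdtend' : Tendsto d atTop (𝓝[Set.Ici 0] r) := by
      rw [tendsto_nhdsWithin_iff]
      exact ⟨hdtend, Filter.Eventually.of_forall hdnn⟩
    have := (hdtend'.eventually husc).exists
    obtain ⟨n, hn⟩ := this
    exact absurd ((hdpsi n).trans_lt hn) (not_lt.mpr (hrd (n + 1)))
  have hdtend0 : Tendsto d atTop (𝓝 0) := hr0 ▸ hdtend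
  -- Cauchy
  have hcauchy : CauchySeq x := by
    rw [Metric.cauchySeq_iff']
    intro ε hε
    have hψε : ψ ε < ε := hψlt ε hε
    have hgap : 0 < ε - ψ ε := by linarith
    obtain ⟨N, hN⟩ := (Metric.tendsto_atTop.mp hdtend0 (ε - ψ ε) hgap)
    have hdN : d N < ε - ψ ε := by
      have := hN N le_rfl
      rwa [Real.dist_eq, sub_zero, abs_of_nonneg (hdnn N)] at this
    refine ⟨N, fun n hn => ?_⟩
    obtain ⟨k, rfl⟩ := Nat.exists_eq_add_of_le hn
    have key : ∀ k, dist (x N) (x (N + k)) < ε := by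
      intro k
      induction k with
      | zero => simpa using hε
      | succ m ih =>
        have h1 : dist (x (N + 1)) (x (N + m + 1)) ≤ ψ (dist (x N) (x (N + m))) := by
          have := hcontr (x N) (x (N + m)) (Or.inl (hmono (Nat.le_add_right N m)))
          simpa [hsucc] using this
        have h2 : ψ (dist (x N) (x (N + m))) ≤ ψ ε :=
          hψmono dist_nonneg hε.le (by simpa [Nat.add_assoc] using ih.le)
        calc dist (x N) (x (N + (m + 1)))
            ≤ dist (x N) (x (N + 1)) + dist (x (N + 1)) (x (N + (m + 1))) :=
              dist_triangle _ _ _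
          _ < (ε - ψ ε) + ψ ε := by
              have : dist (x (N + 1)) (x (N + (m + 1))) ≤ ψ ε := by
                have := h1.trans h2
                simpa [Nat.add_assoc, Nat.add_comm, Nat.add_left_comm] using this
              have hdN' : dist (x N) (x (N + 1)) < ε - ψ ε := hdN
              linarith
          _ = ε := by ring
    have := key k
    rw [dist_comm]
    exact this
  obtain ⟨xbar, hxbar⟩ := cauchySeq_tendsto_of_complete hcauchy
  refine ⟨xbar, ?_, hxbar⟩
  have hle : ∀ n, x n ≤ xbar := hreg x xbar hmono hxbar
  have hstep : ∀ n, dist (x (n + 1)) (T xbar) ≤ dist (x n) xbar := by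
    intro n
    rcases eq_or_lt_of_le (dist_nonneg (x := x n) (y := xbar)) with h0 | hpos
    · have : x n = xbar := dist_eq_zero.mp h0.symm
      simp [hsucc, this]
    · have := hcontr (x n) xbar (Or.inl (hle n))
      rw [← hsucc] at this
      exact this.trans (hψlt _ hpos).le
  have hdist0 : Tendsto (fun n => dist (x n) xbar) atTop (𝓝 0) :=
    tendsto_iff_dist_tendsto_zero.mp hxbar
  have htend1 : Tendsto (fun n => dist (x (n + 1)) (T xbar)) atTop (𝓝 0) :=
    squeeze_zero (fun n => dist_nonneg) hstep hdist0
  have htend2 : Tendsto (fun n => x (n + 1)) atTop (𝓝 (T xbar)) :=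
    tendsto_iff_dist_tendsto_zero.mpr htend1
  have htend3 : Tendsto (fun n => x (n + 1)) atTop (𝓝 xbar) :=
    hxbar.comp (tendsto_add_atTop_nat 1)
  exact tendsto_nhds_unique htend2 htend3
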